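/- Let G = (V, E) be a simple graph with |V| = n vertices, where n is even and n ≥ 6. Construct 2n points {p_v : v ∈ V} ∪ {q_v : v ∈ V}, paired as {p_v, q_v}, with distance function d given by: d(q_u, q_v) = 0 for all u ≠ v; d(p_u, q_v) = 2 for all u, v; d(p_u, p_v) = min(ρ_G(u, v), 4) for u ≠ v, where ρ_G is the shortest-path distance in G (with ρ_G(u,v) = ∞ if u, v are in different components); and d(x, x) = 0. Then V can be partitioned into two sets V_1, V_2 with |V_1| = |V_2| = n/2 such that the induced subgraphs G[V_1] and G[V_2] are both connected, if and only if there exists a feasible coloring of the 2n points into R and B with max(mstCost(R), mstCost(B)) ≤ n/2 + 1, where mstCost is computed with respect to d. -/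

import Mathlib

/-- Two points are connected via the edge set `E` (edges usable in both directions). -/
def EdgeConn {β : Type*} (E : Finset (β × β)) (x y : β) : Prop :=
  Relation.ReflTransGen (fun a b => (a, b) ∈ E ∨ (b, a) ∈ E) x y

/-- `E` is (the edge set of) a spanning tree of the complete graph on the finite
point set `X`. -/
def IsSpanningTreeOn {β : Type*} (X : Finset β) (E : Finset (β × β)) : Prop :=
  (∀ e ∈ E, e.1 ∈ X ∧ e.2 ∈ X) ∧ E.card + 1 = X.card ∧
    ∀ x ∈ X, ∀ y ∈ X, EdgeConn E x y

/-- The minimum total edge weight of a spanning tree on `X`, with respect to a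
given symmetric nonnegative distance function `d`. -/
noncomputable def mstCostD {β : Type*} (d : β → β → ℝ) (X : Finset β) : ℝ :=
  sInf {c | ∃ E : Finset (β × β), IsSpanningTreeOn X E ∧ c = ∑ e ∈ E, d e.1 e.2}

open Classical in
/-- The distance function of the reduction: points are `(v, false) = p_v` and
`(v, true) = q_v`; `d(q_u, q_v) = 0`, `d(p_u, q_v) = 2`, and
`d(p_u, p_v) = min (ρ_G(u,v)) 4` for `u ≠ v` (with `ρ_G(u,v) = ∞`, hence the
minimum `4`, when `u` and `v` lie in different components), `d(x,x) = 0`. -/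
noncomputable def reductionDist {V : Type*} (G : SimpleGraph V) :
    V × Bool → V × Bool → ℝ := fun x y =>
  if x = y then 0
  else if x.2 = true ∧ y.2 = true then 0
  else if x.2 ≠ y.2 then 2
  else min (if G.Reachable x.1 y.1 then (G.dist x.1 y.1 : ℝ) else 4) 4

/-!
Write a feasible colouring as `σ : V → Bool`, with `R = {(v, σ v)}` and `B = {(v, !σ v)}`, and
let `S` be the set of vertices whose point `p_v` lies in `R`. If `G[S]` is connected and `R`
contains some `q`-point, then a spanning tree of `G[S]` on the `p`-points (edges of length `1`),
a star of length `0` on the `q`-points and one edge of length `2` give `mstCost R ≤ |S| + 1`.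

Conversely, every spanning tree of a point set `X` has at least `|f(X)| - 1` edges separating
the values of any labelling `f`. Label the points of `R` once by their vertex and once by a
union of components of `G[S]`, collapsing all `q`-points in both: an edge of `R` then costs at
least the number of labellings separating its ends. So if `R` contains a `q`-point and `S ≠ ∅`,
then `mstCost R ≥ |S| + 1`, and even `≥ |S| + 2` when `G[S]` is disconnected; if `R` contains
no `q`-point, then `mstCost R ≥ n - 1`. A cost of at most `n/2 + 1` on both sides therefore
forces `|S| = |V \ S| = n/2` with both halves connected.
-/

open Finset

namespace EdgeConn

variable {β γ : Type*} {E E' : Finset (β × β)} {x y : β}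

lemma of_mem (h : (x, y) ∈ E) : EdgeConn E x y :=
  Relation.ReflTransGen.single (Or.inl h)

lemma symm (h : EdgeConn E x y) : EdgeConn E y x :=
  have : Std.Symm fun a b : β => (a, b) ∈ E ∨ (b, a) ∈ E := ⟨fun _ _ => Or.symm⟩
  Std.Symm.symm (r := Relation.ReflTransGen _) _ _ h

lemma mono (hE : E ⊆ E') (h : EdgeConn E x y) : EdgeConn E' x y :=
  Relation.ReflTransGen.mono (fun _ _ => Or.imp (@hE _) (@hE _)) _ _ h

lemma apply_eq {f : β → γ} (hf : ∀ e ∈ E, f e.1 = f e.2) (h : EdgeConn E x y) : f x = f y := by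
  induction h with
  | refl => rfl
  | tail _ hbc ih =>
    rcases hbc with h | h
    exacts [ih.trans (hf _ h), ih.trans (hf _ h).symm]

end EdgeConn

lemma SimpleGraph.Reachable.edgeConn {α β : Type*} {H : SimpleGraph α} {E : Finset (β × β)}
    {f : α → β} (hE : ∀ a b, H.Adj a b → EdgeConn E (f a) (f b)) {a b : α}
    (h : H.Reachable a b) : EdgeConn E (f a) (f b) :=
  Relation.ReflTransGen.lift' f hE _ _ ((SimpleGraph.reachable_iff_reflTransGen a b).1 h)

section SpanningTree

variable {β : Type*} [DecidableEq β]

theorem exists_isSpanningTreeOn_image {α : Type*} [Fintype α] {H : SimpleGraph α}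
    (hH : H.Connected) {f : α → β} (hf : f.Injective) :
    ∃ E, IsSpanningTreeOn (univ.image f) E ∧ ∀ e ∈ E, ∃ a b, H.Adj a b ∧ e = (f a, f b) := by
  classical
  obtain ⟨T, hTH, hT⟩ := hH.exists_isTree_le
  let pair : Sym2 α → β × β := fun e : Sym2 α => (f (Quot.out e).1, f (Quot.out e).2)
  have hpair : ∀ e : Sym2 α, s((Quot.out e).1, (Quot.out e).2) = e := Quot.out_eq
  have hpair_inj : pair.Injective := fun e e' h => by
    simp only [pair, Prod.mk.injEq, hf.eq_iff] at h
    rw [← hpair e, ← hpair e', Prod.ext h.1 h.2]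
  have hadj : ∀ e ∈ T.edgeFinset, T.Adj (Quot.out e).1 (Quot.out e).2 := fun e he => by
    rwa [SimpleGraph.mem_edgeFinset, ← hpair e, SimpleGraph.mem_edgeSet] at he
  refine ⟨T.edgeFinset.image pair, ⟨?_, ?_, ?_⟩, ?_⟩
  · simp [pair]
  · rw [card_image_of_injective _ hpair_inj, card_image_of_injective _ hf, card_univ,
      hT.card_edgeFinset]
  · have hstep : ∀ a b, T.Adj a b → EdgeConn (T.edgeFinset.image pair) (f a) (f b) := by
      intro a b hab
      have hmem : pair s(a, b) ∈ T.edgeFinset.image pair :=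
        mem_image_of_mem _ (SimpleGraph.mem_edgeFinset.2 hab)
      have hout := hpair s(a, b)
      rw [Sym2.eq_iff] at hout
      rcases hout with ⟨ha, hb⟩ | ⟨ha, hb⟩
      · exact .of_mem (by simpa [pair, ha, hb] using hmem)
      · exact .symm (.of_mem (by simpa [pair, ha, hb] using hmem))
    simp only [mem_image, mem_univ, true_and]
    rintro _ ⟨a, rfl⟩ _ ⟨b, rfl⟩
    exact (hT.connected.preconnected a b).edgeConn hstep
  · simp only [mem_image]
    rintro _ ⟨e, he, rfl⟩
    exact ⟨_, _, hTH (hadj e he), rfl⟩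

theorem exists_isSpanningTreeOn {X : Finset β} (hX : X.Nonempty) : ∃ E, IsSpanningTreeOn X E := by
  have : Nonempty X := hX.to_subtype
  obtain ⟨E, hE, -⟩ := exists_isSpanningTreeOn_image SimpleGraph.connected_top
    (Subtype.val_injective (p := (· ∈ X)))
  rw [univ_eq_attach, attach_image_val] at hE
  exact ⟨E, hE⟩

theorem IsSpanningTreeOn.insert_union {X₁ X₂ : Finset β} {E₁ E₂ : Finset (β × β)} {x₁ x₂ : β}
    (h₁ : IsSpanningTreeOn X₁ E₁) (h₂ : IsSpanningTreeOn X₂ E₂) (hX : Disjoint X₁ X₂)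
    (hx₁ : x₁ ∈ X₁) (hx₂ : x₂ ∈ X₂) :
    IsSpanningTreeOn (X₁ ∪ X₂) (insert (x₁, x₂) (E₁ ∪ E₂)) := by
  have hE : Disjoint E₁ E₂ :=
    disjoint_left.2 fun e he₁ he₂ => disjoint_left.1 hX (h₁.1 e he₁).1 (h₂.1 e he₂).1
  have hx : (x₁, x₂) ∉ E₁ ∪ E₂ := by
    rw [mem_union, not_or]
    exact ⟨fun h => disjoint_left.1 hX (h₁.1 _ h).2 hx₂,
      fun h => disjoint_left.1 hX hx₁ (h₂.1 _ h).1⟩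
  have hconn : ∀ x ∈ X₁ ∪ X₂, EdgeConn (insert (x₁, x₂) (E₁ ∪ E₂)) x₁ x := by
    have hbridge : EdgeConn (insert (x₁, x₂) (E₁ ∪ E₂)) x₁ x₂ := .of_mem (mem_insert_self _ _)
    intro x hx
    rcases mem_union.1 hx with hx | hx
    · exact (h₁.2.2 x₁ hx₁ x hx).mono (subset_union_left.trans (subset_insert _ _))
    · exact hbridge.trans ((h₂.2.2 x₂ hx₂ x hx).mono
        (subset_union_right.trans (subset_insert _ _)))
  refine ⟨?_, ?_, fun x hx y hy => (hconn x hx).symm.trans (hconn y hy)⟩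
  · intro e he
    rw [mem_insert, mem_union] at he
    rcases he with rfl | he | he
    · exact ⟨mem_union_left _ hx₁, mem_union_right _ hx₂⟩
    · exact ⟨mem_union_left _ (h₁.1 e he).1, mem_union_left _ (h₁.1 e he).2⟩
    · exact ⟨mem_union_right _ (h₂.1 e he).1, mem_union_right _ (h₂.1 e he).2⟩
  · rw [card_insert_of_notMem hx, card_union_of_disjoint hE, card_union_of_disjoint hX,
      ← h₁.2.1, ← h₂.2.1]
    ring

end SpanningTree

section MstCost

variable {β : Type*} {d : β → β → ℝ} {X : Finset β}

theorem mstCostD_le_sum (hd : ∀ x y, 0 ≤ d x y) {E : Finset (β × β)}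
    (hE : IsSpanningTreeOn X E) : mstCostD d X ≤ ∑ e ∈ E, d e.1 e.2 :=
  csInf_le ⟨0, fun _ ⟨_, _, hc⟩ => hc ▸ sum_nonneg fun _ _ => hd _ _⟩ ⟨E, hE, rfl⟩

theorem mstCostD_union_le [DecidableEq β] (hd : ∀ x y, 0 ≤ d x y) {X₁ X₂ : Finset β}
    {E₁ E₂ : Finset (β × β)} {x₁ x₂ : β} (h₁ : IsSpanningTreeOn X₁ E₁)
    (h₂ : IsSpanningTreeOn X₂ E₂) (hX : Disjoint X₁ X₂) (hx₁ : x₁ ∈ X₁) (hx₂ : x₂ ∈ X₂) :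
    mstCostD d (X₁ ∪ X₂) ≤ d x₁ x₂ + ∑ e ∈ E₁, d e.1 e.2 + ∑ e ∈ E₂, d e.1 e.2 := by
  have hE : Disjoint E₁ E₂ :=
    disjoint_left.2 fun e he₁ he₂ => disjoint_left.1 hX (h₁.1 e he₁).1 (h₂.1 e he₂).1
  have hx : (x₁, x₂) ∉ E₁ ∪ E₂ := fun h =>
    (mem_union.1 h).elim (fun h => disjoint_left.1 hX (h₁.1 _ h).2 hx₂)
      (fun h => disjoint_left.1 hX hx₁ (h₂.1 _ h).1)
  calc mstCostD d (X₁ ∪ X₂) ≤ ∑ e ∈ insert (x₁, x₂) (E₁ ∪ E₂), d e.1 e.2 :=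
        mstCostD_le_sum hd (h₁.insert_union h₂ hX hx₁ hx₂)
    _ = _ := by rw [sum_insert hx, sum_union hE, add_assoc]

/-- Contracting the classes of `f` one crossing edge at a time: merging the class of `e.2`
into that of `e.1` loses at most one value of `f` and at least one crossing edge. -/
theorem card_image_le_card_filter_ne_add_one {γ : Type*} [DecidableEq γ] {E : Finset (β × β)}
    (hE : ∀ x ∈ X, ∀ y ∈ X, EdgeConn E x y) (f : β → γ) :
    #(X.image f) ≤ #{e ∈ E | f e.1 ≠ f e.2} + 1 := by
  classical
  induction hk : #{e ∈ E | f e.1 ≠ f e.2} using Nat.strong_induction_on generalizing f with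
  | _ k ih =>
  obtain hcut | ⟨e, he⟩ := ({e ∈ E | f e.1 ≠ f e.2} : Finset _).eq_empty_or_nonempty
  · have hf : ∀ e ∈ E, f e.1 = f e.2 := by simpa [filter_eq_empty_iff] using hcut
    have : #(X.image f) ≤ 1 := card_le_one.2 <| by
      simp only [mem_image]
      rintro _ ⟨x, hx, rfl⟩ _ ⟨y, hy, rfl⟩
      exact (hE x hx y hy).apply_eq hf
    omega
  · let f' : β → γ := fun z => if f z = f e.2 then f e.1 else f z
    have hcut' : {e' ∈ E | f' e'.1 ≠ f' e'.2} ⊆ {e' ∈ E | f e'.1 ≠ f e'.2}.erase e := by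
      intro e' he'
      simp only [mem_filter, mem_erase] at he' ⊢
      refine ⟨?_, he'.1, fun h => he'.2 (by simp only [f', h])⟩
      rintro rfl
      simp [f'] at he'
    have himage : X.image f ⊆ insert (f e.2) (X.image f') := by
      simp only [subset_iff, mem_image, mem_insert]
      rintro _ ⟨x, hx, rfl⟩
      by_cases hfx : f x = f e.2
      · exact .inl hfx
      · exact .inr ⟨x, hx, if_neg hfx⟩
    have hk₀ : 0 < k := hk ▸ card_pos.2 ⟨e, he⟩
    have h₁ := card_le_card hcut'
    have h₂ := (card_le_card himage).trans (card_insert_le _ _)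
    rw [card_erase_of_mem he, hk] at h₁
    have := ih _ (by omega) f' rfl
    omega

theorem le_mstCostD_of_labels [DecidableEq β] {γ δ : Type*} [DecidableEq γ] [DecidableEq δ]
    (hX : X.Nonempty) (f : β → γ) (g : β → δ)
    (hd : ∀ x ∈ X, ∀ y ∈ X,
      (if f x ≠ f y then 1 else 0) + (if g x ≠ g y then 1 else 0) ≤ d x y) :
    (#(X.image f) + #(X.image g) : ℝ) ≤ mstCostD d X + 2 := by
  rw [← sub_le_iff_le_add]
  obtain ⟨E₀, hE₀⟩ := exists_isSpanningTreeOn hX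
  refine le_csInf ⟨_, E₀, hE₀, rfl⟩ ?_
  rintro _ ⟨E, hE, rfl⟩
  have hf : (#(X.image f) : ℝ) ≤ #{e ∈ E | f e.1 ≠ f e.2} + 1 := by
    exact_mod_cast card_image_le_card_filter_ne_add_one hE.2.2 f
  have hg : (#(X.image g) : ℝ) ≤ #{e ∈ E | g e.1 ≠ g e.2} + 1 := by
    exact_mod_cast card_image_le_card_filter_ne_add_one hE.2.2 g
  calc (#(X.image f) + #(X.image g) : ℝ) - 2
      ≤ #{e ∈ E | f e.1 ≠ f e.2} + #{e ∈ E | g e.1 ≠ g e.2} := by linarith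
    _ = ∑ e ∈ E, ((if f e.1 ≠ f e.2 then 1 else 0) + (if g e.1 ≠ g e.2 then 1 else 0)) := by
      rw [sum_add_distrib, sum_boole, sum_boole]
    _ ≤ ∑ e ∈ E, d e.1 e.2 := sum_le_sum fun e he => hd _ (hE.1 e he).1 _ (hE.1 e he).2

end MstCost

namespace reductionDist

variable {V : Type*} (G : SimpleGraph V)

lemma nonneg (x y : V × Bool) : 0 ≤ reductionDist G x y := by
  unfold reductionDist
  split_ifs <;> positivity

lemma of_snd_ne {x y : V × Bool} (h : x.2 ≠ y.2) : reductionDist G x y = 2 := by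
  obtain ⟨u, a⟩ := x
  obtain ⟨v, b⟩ := y
  cases a <;> cases b <;> simp_all [reductionDist]

lemma true_true (u v : V) : reductionDist G (u, true) (v, true) = 0 := by
  simp [reductionDist]

lemma of_adj {u v : V} (h : G.Adj u v) : reductionDist G (u, false) (v, false) = 1 := by
  simp [reductionDist, h.ne, h.reachable, SimpleGraph.dist_eq_one_iff_adj.2 h]

variable {G} {u v : V}

lemma le_of_ne {c : ℝ} (h : u ≠ v) (hc : 0 < G.dist u v → c ≤ G.dist u v) (hc4 : c ≤ 4) :
    c ≤ reductionDist G (u, false) (v, false) := by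
  simp only [reductionDist, Prod.mk.injEq, h, false_and, if_false, Bool.false_eq_true, and_self,
    ne_eq, not_true_eq_false]
  refine le_min ?_ hc4
  split_ifs with hr
  · exact hc (hr.pos_dist_of_ne h)
  · exact hc4

lemma one_le (h : u ≠ v) : 1 ≤ reductionDist G (u, false) (v, false) :=
  le_of_ne h (fun hpos => by exact_mod_cast hpos) (by norm_num)

lemma two_le (h : u ≠ v) (hadj : ¬G.Adj u v) : 2 ≤ reductionDist G (u, false) (v, false) :=
  le_of_ne h (fun hpos => by
    have : G.dist u v ≠ 1 := fun h1 => hadj (SimpleGraph.dist_eq_one_iff_adj.1 h1)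
    exact_mod_cast (show 2 ≤ G.dist u v by omega)) (by norm_num)

end reductionDist

section Coloring

variable {V : Type*} [Fintype V]

def pSide (σ : V → Bool) : Finset V := {v | σ v = false}

@[simp] lemma mem_pSide {σ : V → Bool} {v : V} : v ∈ pSide σ ↔ σ v = false := by
  simp [pSide]

lemma pSide_not [DecidableEq V] (σ : V → Bool) : pSide (fun v => !σ v) = (pSide σ)ᶜ := by
  ext v
  simp

variable [DecidableEq V] (G : SimpleGraph V)

def colorClass (σ : V → Bool) : Finset (V × Bool) := univ.image fun v => (v, σ v)

def pLabel {α : Type*} (g : V → α) (z : V × Bool) : Option α :=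
  if z.2 then none else some (g z.1)

lemma card_image_pLabel {α : Type*} [DecidableEq α] (σ : V → Bool) (g : V → α) :
    #((colorClass σ).image (pLabel g)) =
      #((pSide σ).image g) + if (pSide σ)ᶜ.Nonempty then 1 else 0 := by
  have hsplit : (colorClass σ).image (pLabel g) =
      ((pSide σ).image g).image some ∪ (pSide σ)ᶜ.image fun _ => none := by
    ext (_ | a) <;> simp [colorClass, pLabel, and_comm]
  have hdisj : Disjoint (((pSide σ).image g).image some) ((pSide σ)ᶜ.image fun _ => none) := by
    simp [disjoint_left]
  rw [hsplit, card_union_of_disjoint hdisj, card_image_of_injective _ (Option.some_injective _)]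
  split_ifs with hT
  · rw [image_const hT, card_singleton]
  · rw [not_nonempty_iff_eq_empty.1 hT, image_empty, card_empty]

lemma pLabel_cut_le_reductionDist {σ c : V → Bool}
    (hc : ∀ u v, σ u = false → σ v = false → G.Adj u v → c u = c v) {x y : V × Bool}
    (hx : x ∈ colorClass σ) (hy : y ∈ colorClass σ) :
    (if pLabel c x ≠ pLabel c y then 1 else 0) + (if pLabel id x ≠ pLabel id y then 1 else 0)
      ≤ reductionDist G x y := by
  obtain ⟨u, -, rfl⟩ := mem_image.1 hx
  obtain ⟨v, -, rfl⟩ := mem_image.1 hy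
  cases hu : σ u <;> cases hv : σ v
  · by_cases huv : u = v
    · subst huv
      simp [reductionDist.nonneg]
    by_cases hcuv : c u = c v
    · simpa [pLabel, hcuv, huv] using reductionDist.one_le huv
    · have hadj : ¬G.Adj u v := fun hadj => hcuv (hc u v hu hv hadj)
      simpa [pLabel, hcuv, huv, one_add_one_eq_two] using reductionDist.two_le huv hadj
  all_goals simp [pLabel, reductionDist.true_true, reductionDist.of_snd_ne, one_add_one_eq_two]

theorem le_mstCostD_colorClass [Nonempty V] {σ c : V → Bool}
    (hc : ∀ u v, σ u = false → σ v = false → G.Adj u v → c u = c v) :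
    (#((pSide σ).image c) + #(pSide σ) + 2 * (if (pSide σ)ᶜ.Nonempty then 1 else 0) : ℝ)
      ≤ mstCostD (reductionDist G) (colorClass σ) + 2 := by
  have h := le_mstCostD_of_labels (X := colorClass σ) (univ_nonempty.image _) (pLabel c) (pLabel id)
    fun x hx y hy => pLabel_cut_le_reductionDist G hc hx hy
  rw [card_image_pLabel, card_image_pLabel, image_id] at h
  push_cast at h
  linarith

theorem card_pSide_le_of_mstCostD_le {σ : V → Bool} {m : ℕ}
    (hcost : mstCostD (reductionDist G) (colorClass σ) ≤ m + 1)
    (hm : m + 2 < Fintype.card V) : #(pSide σ) ≤ m := by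
  have : Nonempty V := Fintype.card_pos_iff.1 (by omega)
  have hlb := le_mstCostD_colorClass G (σ := σ) (c := fun _ => true) (by simp)
  by_cases hT : (pSide σ)ᶜ.Nonempty
  · obtain hS | hS := (pSide σ).eq_empty_or_nonempty
    · simp [hS]
    rw [if_pos hT, image_const hS, card_singleton] at hlb
    have : (#(pSide σ) : ℝ) ≤ m := by push_cast at hlb; linarith
    exact_mod_cast this
  · have hS : pSide σ = univ := by simpa using hT
    rw [if_neg hT, hS, image_const univ_nonempty, card_singleton, card_univ] at hlb
    have : (Fintype.card V : ℝ) ≤ m + 2 := by push_cast at hlb; linarith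
    have : Fintype.card V ≤ m + 2 := by exact_mod_cast this
    omega

theorem connected_induce_pSide_of_mstCostD_le {σ : V → Bool} (hS : (pSide σ).Nonempty)
    (hT : (pSide σ)ᶜ.Nonempty)
    (hcost : mstCostD (reductionDist G) (colorClass σ) ≤ #(pSide σ) + 1) :
    (G.induce (pSide σ : Set V)).Connected := by
  classical
  have : Nonempty V := ⟨hS.choose⟩
  refine (SimpleGraph.connected_iff _).2 ⟨fun x y => ?_, hS.coe_sort⟩
  by_contra hxy
  let c : V → Bool := fun v =>
    decide (∃ hv : v ∈ (pSide σ : Set V), (G.induce (pSide σ : Set V)).Reachable x ⟨v, hv⟩)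
  have hc : ∀ u v, σ u = false → σ v = false → G.Adj u v → c u = c v := by
    intro u v hu hv huv
    have hu' : u ∈ (pSide σ : Set V) := mem_coe.2 (mem_pSide.2 hu)
    have hv' : v ∈ (pSide σ : Set V) := mem_coe.2 (mem_pSide.2 hv)
    have hadj : (G.induce (pSide σ : Set V)).Adj ⟨u, hu'⟩ ⟨v, hv'⟩ := huv
    simp only [c, decide_eq_decide]
    exact ⟨fun ⟨_, h⟩ => ⟨hv', h.trans hadj.reachable⟩,
      fun ⟨_, h⟩ => ⟨hu', h.trans hadj.symm.reachable⟩⟩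
  have hcard : 1 < #((pSide σ).image c) := by
    refine one_lt_card.2 ⟨c x, mem_image_of_mem _ (mem_coe.1 x.2), c y,
      mem_image_of_mem _ (mem_coe.1 y.2), ?_⟩
    simp only [c, ne_eq, decide_eq_decide]
    exact fun h => hxy (h.1 ⟨x.2, .rfl⟩).2
  have hlb := le_mstCostD_colorClass G hc
  rw [if_pos hT] at hlb
  have : (2 : ℝ) ≤ #((pSide σ).image c) := by exact_mod_cast hcard
  linarith

theorem mstCostD_colorClass_le_of_connected {σ : V → Bool}
    (hS : (G.induce (pSide σ : Set V)).Connected) (hT : (pSide σ)ᶜ.Nonempty) :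
    mstCostD (reductionDist G) (colorClass σ) ≤ #(pSide σ) + 1 := by
  have : Nonempty (((pSide σ)ᶜ : Finset V) : Set V) := hT.coe_sort
  have hinj : ∀ (b : Bool) (A : Set V), (fun a : A => (a.1, b)).Injective := fun b _ =>
    (Prod.mk_left_injective b).comp Subtype.val_injective
  obtain ⟨E₁, hE₁, hE₁adj⟩ := exists_isSpanningTreeOn_image hS (hinj false _)
  obtain ⟨E₂, hE₂, hE₂adj⟩ :=
    exists_isSpanningTreeOn_image SimpleGraph.connected_top (hinj true ((pSide σ)ᶜ : Finset V))
  obtain ⟨s⟩ := hS.nonempty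
  obtain ⟨t⟩ := this
  have hsplit : colorClass σ = (univ.image fun a : (pSide σ : Set V) => (a.1, false)) ∪
      univ.image fun a : (((pSide σ)ᶜ : Finset V) : Set V) => (a.1, true) := by
    ext ⟨v, b⟩
    cases b <;> simp [colorClass]
  have hdisj : Disjoint (univ.image fun a : (pSide σ : Set V) => (a.1, false))
      (univ.image fun a : (((pSide σ)ᶜ : Finset V) : Set V) => (a.1, true)) := by
    simp [disjoint_left]
  have hsum₁ : ∑ e ∈ E₁, reductionDist G e.1 e.2 = #E₁ := by
    rw [card_eq_sum_ones, Nat.cast_sum, Nat.cast_one]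
    refine sum_congr rfl fun e he => ?_
    obtain ⟨a, b, hab, rfl⟩ := hE₁adj e he
    exact reductionDist.of_adj G hab
  have hsum₂ : ∑ e ∈ E₂, reductionDist G e.1 e.2 = 0 := sum_eq_zero fun e he => by
    obtain ⟨a, b, -, rfl⟩ := hE₂adj e he
    exact reductionDist.true_true G _ _
  have hcard₁ : #E₁ + 1 = #(pSide σ) := by
    rw [hE₁.2.1, card_image_of_injective _ (hinj false _)]
    simp
  calc mstCostD (reductionDist G) (colorClass σ)
      ≤ reductionDist G (s.1, false) (t.1, true) + ∑ e ∈ E₁, reductionDist G e.1 e.2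
        + ∑ e ∈ E₂, reductionDist G e.1 e.2 := by
        rw [hsplit]
        exact mstCostD_union_le (reductionDist.nonneg G) hE₁ hE₂ hdisj
          (mem_image_of_mem _ (mem_univ s)) (mem_image_of_mem _ (mem_univ t))
    _ = #(pSide σ) + 1 := by
        rw [reductionDist.of_snd_ne G (by simp), hsum₁, hsum₂, ← hcard₁]
        push_cast
        ring

end Coloring

theorem minmax_two_mst_reduction_general {V : Type*} [Fintype V] [DecidableEq V]
    (G : SimpleGraph V) (n : ℕ) (hn : n = Fintype.card V)
    (h6 : 6 ≤ n) :
    (∃ V₁ : Finset V, V₁.card = n / 2 ∧ (Finset.univ \ V₁).card = n / 2 ∧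
        (G.induce (V₁ : Set V)).Connected ∧
        (G.induce ((Finset.univ \ V₁ : Finset V) : Set V)).Connected) ↔
    (∃ σ : V → Bool,
      max (mstCostD (reductionDist G)
            (Finset.image (fun v => (v, σ v)) Finset.univ))
          (mstCostD (reductionDist G)
            (Finset.image (fun v => (v, !(σ v))) Finset.univ)) ≤
        ((n / 2 : ℕ) : ℝ) + 1) := by
  simp only [← compl_eq_univ_sdiff]
  constructor
  · rintro ⟨V₁, hV₁, hV₂, hconn₁, hconn₂⟩
    let σ : V → Bool := fun v => decide (v ∉ V₁)
    have hσ : pSide σ = V₁ := by ext; simp [σ]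
    have hσ' : pSide (fun v => !σ v) = V₁ᶜ := by rw [pSide_not, hσ]
    have hne₁ : V₁.Nonempty := card_pos.1 (by omega)
    have hne₂ : V₁ᶜ.Nonempty := card_pos.1 (by omega)
    refine ⟨σ, max_le ?_ ?_⟩
    · have := mstCostD_colorClass_le_of_connected G (σ := σ) (by rwa [hσ]) (by rwa [hσ])
      rwa [hσ, hV₁] at this
    · have := mstCostD_colorClass_le_of_connected G (σ := fun v => !σ v) (by rwa [hσ'])
        (by rwa [hσ', compl_compl])
      rwa [hσ', hV₂] at this
  · rintro ⟨σ, hcost⟩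
    obtain ⟨hR, hB⟩ := max_le_iff.1 hcost
    have hσ' : pSide (fun v => !σ v) = (pSide σ)ᶜ := pSide_not σ
    have hS := card_pSide_le_of_mstCostD_le G hR (by omega)
    have hT := card_pSide_le_of_mstCostD_le G hB (by omega)
    rw [hσ', card_compl, ← hn] at hT
    have hS' : #(pSide σ) = n / 2 := by omega
    have hT' : #(pSide σ)ᶜ = n / 2 := by rw [card_compl]; omega
    have hSne : (pSide σ).Nonempty := card_pos.1 (by omega)
    have hTne : (pSide σ)ᶜ.Nonempty := card_pos.1 (by omega)
    refine ⟨pSide σ, hS', hT', ?_, ?_⟩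
    · exact connected_induce_pSide_of_mstCostD_le G hSne hTne (by rwa [hS'])
    · have := connected_induce_pSide_of_mstCostD_le G (σ := fun v => !σ v) (by rwa [hσ'])
        (by rwa [hσ', compl_compl]) (by rwa [hσ', hT'])
      rwa [hσ'] at this

/-- For a simple graph `G` on `n` vertices (`n` even, `n ≥ 6`), `G` can be
partitioned into two connected induced subgraphs on `n/2` vertices each if and only if the
corresponding Min-Max 2-MST instance (on the `2n` points `V × Bool`, paired as
`{(v, false), (v, true)}`, with distances `reductionDist G`) admits a feasible coloring of
cost at most `n/2 + 1`. -/
theorem minmax_two_mst_reduction {V : Type*} [Fintype V] [DecidableEq V]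
    (G : SimpleGraph V) (n : ℕ) (hn : n = Fintype.card V)
    (heven : Even n) (h6 : 6 ≤ n) :
    (∃ V₁ : Finset V, V₁.card = n / 2 ∧ (Finset.univ \ V₁).card = n / 2 ∧
        (G.induce (V₁ : Set V)).Connected ∧
        (G.induce ((Finset.univ \ V₁ : Finset V) : Set V)).Connected) ↔
    (∃ σ : V → Bool,
      max (mstCostD (reductionDist G)
            (Finset.image (fun v => (v, σ v)) Finset.univ))
          (mstCostD (reductionDist G)
            (Finset.image (fun v => (v, !(σ v))) Finset.univ)) ≤
        ((n / 2 : ℕ) : ℝ) + 1) :=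
  minmax_two_mst_reduction_general G n hn h6
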